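/- Let n ≥ 2 and let i be an integer with 1 ≤ i ≤ n−1. For every permutation p of {1,…,n}, the entries p_i and p_{i+1} are not both leaves of the minmax tree T^m_p. -/

import Mathlib

/-- Binary trees with natural-number labels, used to model minmax trees of
permutations. -/
inductive BTree where
  | nil : BTree
  | node : ℕ → BTree → BTree → BTree
deriving DecidableEq, Repr

namespace BTree

/-- The label of the root (if any). -/
def rootVal : BTree → Option ℕ
  | .nil => none
  | .node v _ _ => some v

/-- Whether the value `x` occurs as a label in the tree. -/
def memB : BTree → ℕ → Bool
  | .nil, _ => false
  | .node v l r, x => (x == v) || memB l x || memB r x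

/-- The number of children of the (unique, for permutations) node labelled `x`. -/
def numChildren : BTree → ℕ → ℕ
  | .nil, _ => 0
  | .node v l r, x =>
      if x = v then (if l = .nil then 0 else 1) + (if r = .nil then 0 else 1)
      else numChildren l x + numChildren r x

/-- `x` is a leaf of the tree: it occurs in the tree and has no children. -/
def IsLeaf (t : BTree) (x : ℕ) : Prop := t.memB x = true ∧ t.numChildren x = 0

instance (t : BTree) (x : ℕ) : Decidable (t.IsLeaf x) := by unfold IsLeaf; infer_instance

/-- `childB t x y = true` iff `x` is a child of `y` in `t`, i.e. `x` is the root of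
the left or the right subtree hanging from `y`. -/
def childB : BTree → ℕ → ℕ → Bool
  | .nil, _, _ => false
  | .node v l r, x, y =>
      ((y == v) && (l.rootVal == some x || r.rootVal == some x))
      || childB l x y || childB r x y

/-- `ancB t x y = true` iff `x` is a (strict) ancestor of `y` in `t`, i.e. `y` lies
in a subtree hanging from `x`. -/
def ancB : BTree → ℕ → ℕ → Bool
  | .nil, _, _ => false
  | .node v l r, x, y =>
      ((x == v) && (memB l y || memB r y)) || ancB l x y || ancB r x y

end BTree

/-- `x` is the leftmost-eligible extreme letter of `l`: the minimum or the maximum. -/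
def isExtreme (l : List ℕ) (x : ℕ) : Bool :=
  (l.min? == some x) || (l.max? == some x)

/-- Fuelled construction of the minmax tree of a list of distinct naturals:
split the list as `u ++ [m] ++ v` where `m` is the leftmost of the minimum and
maximum letters, put `m` at the root and recurse on `u` (left) and `v` (right). -/
def mmAux : ℕ → List ℕ → BTree
  | 0, _ => .nil
  | fuel+1, l =>
    if l.isEmpty then .nil
    else
      let k := l.findIdx (isExtreme l)
      .node (l.getD k 0) (mmAux fuel (l.take k)) (mmAux fuel (l.drop (k+1)))

/-- The minmax tree `T^m_p` of a word `l` (with distinct letters). -/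
def minmaxTree (l : List ℕ) : BTree := mmAux l.length l

/-- The word `p_1 p_2 … p_n` on the letters `{1,…,n}` associated to a permutation
`p` of `Fin n`. -/
def permList (n : ℕ) (p : Equiv.Perm (Fin n)) : List ℕ :=
  List.ofFn (fun i => (p i : ℕ) + 1)

/-- The `i`-th entry `p_i` (1-indexed) of the permutation `p`. -/
def entryAt (n : ℕ) (p : Equiv.Perm (Fin n)) (i : ℕ) : ℕ :=
  (permList n p).getD (i - 1) 0

/-!
The min/max rule plays no role: `T^m_p` is a binary tree whose in-order reading is `p`, obtained
by splitting a word `u m w` at its root `m`. Follow `p_i p_{i+1}` down the tree until a split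
no longer sends both to the same side; then one of them is the root `m` of the current subword
and the other is its neighbour in `u` or `w`, so `m` has a child. Since the letters are distinct,
a letter of `u` is a leaf of the whole tree only if it is a leaf of the left subtree.
-/

namespace BTree

def NotBothLeaves (t : BTree) (x y : ℕ) : Prop := ¬ (t.IsLeaf x ∧ t.IsLeaf y)

theorem numChildren_eq_zero_of_memB_eq_false :
    ∀ {t : BTree} {x : ℕ}, t.memB x = false → t.numChildren x = 0
  | .nil, _, _ => rfl
  | .node v l r, x, h => by
    simp only [memB, Bool.or_eq_false_iff, beq_eq_false_iff_ne] at h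
    obtain ⟨⟨hxv, hl⟩, hr⟩ := h
    simp [numChildren, hxv, numChildren_eq_zero_of_memB_eq_false hl,
      numChildren_eq_zero_of_memB_eq_false hr]

theorem IsLeaf.of_node_left {v x : ℕ} {l r : BTree} (h : (node v l r).IsLeaf x)
    (hxv : x ≠ v) (hr : r.memB x = false) : l.IsLeaf x := by
  obtain ⟨hmem, hnum⟩ := h
  simp only [memB, beq_false_of_ne hxv, hr, Bool.false_or, Bool.or_false] at hmem
  simp only [numChildren, hxv, if_false] at hnum
  exact ⟨hmem, by omega⟩

theorem IsLeaf.of_node_right {v x : ℕ} {l r : BTree} (h : (node v l r).IsLeaf x)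
    (hxv : x ≠ v) (hl : l.memB x = false) : r.IsLeaf x := by
  obtain ⟨hmem, hnum⟩ := h
  simp only [memB, beq_false_of_ne hxv, hl, Bool.false_or, Bool.or_false] at hmem
  simp only [numChildren, hxv, if_false, numChildren_eq_zero_of_memB_eq_false hl] at hnum
  exact ⟨hmem, by omega⟩

theorem not_isLeaf_root {v : ℕ} {l r : BTree} (h : l ≠ nil ∨ r ≠ nil) :
    ¬ (node v l r).IsLeaf v := by
  rintro ⟨-, hnum⟩
  rcases h with h | h <;> simp [numChildren, h] at hnum

theorem isChain_notBothLeaves_node {m : ℕ} {l r : BTree} {u w : List ℕ}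
    (hu : u.IsChain l.NotBothLeaves) (hw : w.IsChain r.NotBothLeaves)
    (hur : ∀ x ∈ u, x ≠ m ∧ r.memB x = false) (hwl : ∀ x ∈ w, x ≠ m ∧ l.memB x = false)
    (hl : u ≠ [] → l ≠ nil) (hr : w ≠ [] → r ≠ nil) :
    (u ++ m :: w).IsChain (node m l r).NotBothLeaves := by
  refine List.IsChain.append ?_ (List.isChain_cons.mpr ⟨?_, ?_⟩) ?_
  · refine hu.imp_of_mem_imp fun x y hx hy hxy ⟨hx', hy'⟩ => hxy ⟨?_, ?_⟩
    · exact hx'.of_node_left (hur x hx).1 (hur x hx).2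
    · exact hy'.of_node_left (hur y hy).1 (hur y hy).2
  · intro y hy h
    exact not_isLeaf_root (.inr (hr (List.ne_nil_of_mem (List.mem_of_mem_head? hy)))) h.1
  · refine hw.imp_of_mem_imp fun x y hx hy hxy ⟨hx', hy'⟩ => hxy ⟨?_, ?_⟩
    · exact hx'.of_node_right (hwl x hx).1 (hwl x hx).2
    · exact hy'.of_node_right (hwl y hy).1 (hwl y hy).2
  · intro x hx y hy h
    obtain rfl : m = y := by simpa using hy
    exact not_isLeaf_root (.inl (hl (List.ne_nil_of_mem (List.mem_of_getLast? hx)))) h.2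

end BTree

theorem exists_mmAux_succ_eq_node {fuel : ℕ} {l : List ℕ} (hl : l ≠ []) :
    ∃ u m w, l = u ++ m :: w ∧ mmAux (fuel + 1) l = .node m (mmAux fuel u) (mmAux fuel w) := by
  have hk : l.findIdx (isExtreme l) < l.length := by
    obtain ⟨a, ha⟩ := Option.ne_none_iff_exists'.mp (mt List.min?_eq_none_iff.mp hl)
    exact List.findIdx_lt_length_of_exists ⟨a, List.min?_mem ha, by simp [isExtreme, ha]⟩
  set k := l.findIdx (isExtreme l)
  refine ⟨l.take k, l.getD k 0, l.drop (k + 1), ?_, by simp [mmAux, hl, k]⟩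
  rw [List.getD_eq_getElem _ _ hk, List.getElem_cons_drop, List.take_append_drop]

theorem mmAux_ne_nil {fuel : ℕ} {l : List ℕ} (hl : l ≠ []) (hfuel : l.length ≤ fuel) :
    mmAux fuel l ≠ .nil := by
  obtain ⟨f, rfl⟩ : ∃ f, fuel = f + 1 :=
    Nat.exists_eq_add_one.mpr (lt_of_lt_of_le (List.length_pos_iff.mpr hl) hfuel)
  obtain ⟨u, m, w, -, h⟩ := exists_mmAux_succ_eq_node (fuel := f) hl
  simp [h]

theorem mem_of_memB_mmAux {x : ℕ} :
    ∀ {fuel : ℕ} {l : List ℕ}, (mmAux fuel l).memB x = true → x ∈ l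
  | 0, _, h => by simp [mmAux, BTree.memB] at h
  | f + 1, l, h => by
    rcases eq_or_ne l [] with rfl | hl
    · simp [mmAux, BTree.memB] at h
    obtain ⟨u, m, w, rfl, htree⟩ := exists_mmAux_succ_eq_node (fuel := f) hl
    simp only [htree, BTree.memB, Bool.or_eq_true, beq_iff_eq] at h
    rcases h with (rfl | h) | h
    · simp
    · simp [mem_of_memB_mmAux h]
    · simp [mem_of_memB_mmAux h]

theorem isChain_notBothLeaves_mmAux :
    ∀ {fuel : ℕ} {l : List ℕ}, l.Nodup → l.length ≤ fuel →
      l.IsChain (mmAux fuel l).NotBothLeaves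
  | 0, l, _, hfuel => by simp_all
  | f + 1, l, hnd, hfuel => by
    rcases eq_or_ne l [] with rfl | hl
    · exact .nil
    obtain ⟨u, m, w, rfl, htree⟩ := exists_mmAux_succ_eq_node (fuel := f) hl
    simp only [List.nodup_append, List.nodup_cons, List.mem_cons] at hnd
    obtain ⟨hu, ⟨hmw, hw⟩, hsep⟩ := hnd
    simp only [List.length_append, List.length_cons] at hfuel
    rw [htree]
    refine BTree.isChain_notBothLeaves_node (isChain_notBothLeaves_mmAux hu (by omega))
      (isChain_notBothLeaves_mmAux hw (by omega)) ?_ ?_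
      (fun h => mmAux_ne_nil h (by omega)) (fun h => mmAux_ne_nil h (by omega))
    · intro x hx
      exact ⟨hsep x hx m (.inl rfl),
        Bool.eq_false_iff.mpr fun h => hsep x hx x (.inr (mem_of_memB_mmAux h)) rfl⟩
    · intro x hx
      exact ⟨by rintro rfl; exact hmw hx,
        Bool.eq_false_iff.mpr fun h => hsep x (mem_of_memB_mmAux h) x (.inr hx) rfl⟩

theorem adjacent_entries_not_both_leaves_general (n : ℕ) (i : ℕ) (hi1 : 1 ≤ i)
    (hi2 : i ≤ n - 1) (p : Equiv.Perm (Fin n)) :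
    ¬ ((minmaxTree (permList n p)).IsLeaf (entryAt n p i) ∧
       (minmaxTree (permList n p)).IsLeaf (entryAt n p (i + 1))) := by
  have hlen : (permList n p).length = n := List.length_ofFn
  have hnd : (permList n p).Nodup :=
    List.nodup_ofFn.mpr fun a b hab => p.injective (Fin.ext (Nat.succ_injective hab))
  have hchain := isChain_notBothLeaves_mmAux hnd le_rfl
  obtain ⟨j, rfl⟩ : ∃ j, i = j + 1 := Nat.exists_eq_add_of_le' hi1
  have hj : j + 1 < (permList n p).length := by omega
  rw [entryAt, entryAt, Nat.add_sub_cancel, Nat.add_sub_cancel,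
    List.getD_eq_getElem _ _ (Nat.lt_of_succ_lt hj), List.getD_eq_getElem _ _ hj]
  exact hchain.getElem j hj

/-- For `n ≥ 2` and `1 ≤ i ≤ n − 1`, in no permutation `p` of
`{1,…,n}` are both `p_i` and `p_{i+1}` leaves of the minmax tree. -/
theorem adjacent_entries_not_both_leaves (n : ℕ) (hn : 2 ≤ n) (i : ℕ) (hi1 : 1 ≤ i)
    (hi2 : i ≤ n - 1) (p : Equiv.Perm (Fin n)) :
    ¬ ((minmaxTree (permList n p)).IsLeaf (entryAt n p i) ∧
       (minmaxTree (permList n p)).IsLeaf (entryAt n p (i + 1))) :=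
  adjacent_entries_not_both_leaves_general n i hi1 hi2 p
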